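/- arXiv:1811.10064 — 2 statements merged into one kernel-verified Lean document; each statement's English description precedes it below -/
import Mathlib

section
/- Let A be an associative unital algebra over ℂ and let a₁, b₁, a₂, b₂ ∈ A satisfy [a₁,b₁] = [a₂,b₂] = 1 and [a₁,a₂] = [a₁,b₂] = [b₁,a₂] = [b₁,b₂] = 0. Define v₁ = a₁, v₂ = b₁, v₃ = b₁*a₂, v₄ = 1, v₅ = a₂. Then [v₁,v₂] = v₄, [v₁,v₃] = v₅, and all other commutators [vᵢ,vⱼ] for i < j vanish. -/
/-- pseudo-bosonic realization of the nilpotent Lie algebra `l₅,₈`. -/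
theorem stmt_1 (A : Type*) [Ring A] [Algebra ℂ A] (a₁ b₁ a₂ b₂ : A)
    (h₁ : a₁ * b₁ - b₁ * a₁ = 1) (h₂ : a₂ * b₂ - b₂ * a₂ = 1)
    (h₃ : a₁ * a₂ - a₂ * a₁ = 0) (h₄ : a₁ * b₂ - b₂ * a₁ = 0)
    (h₅ : b₁ * a₂ - a₂ * b₁ = 0) (h₆ : b₁ * b₂ - b₂ * b₁ = 0) :
    let v₁ := a₁
    let v₂ := b₁
    let v₃ := b₁ * a₂
    let v₄ := (1 : A)
    let v₅ := a₂
    v₁ * v₂ - v₂ * v₁ = v₄ ∧ v₁ * v₃ - v₃ * v₁ = v₅ ∧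
    v₁ * v₄ - v₄ * v₁ = 0 ∧ v₁ * v₅ - v₅ * v₁ = 0 ∧
    v₂ * v₃ - v₃ * v₂ = 0 ∧ v₂ * v₄ - v₄ * v₂ = 0 ∧ v₂ * v₅ - v₅ * v₂ = 0 ∧
    v₃ * v₄ - v₄ * v₃ = 0 ∧ v₃ * v₅ - v₅ * v₃ = 0 ∧ v₄ * v₅ - v₅ * v₄ = 0 := by
  have c3 := sub_eq_zero.mp h₃
  have c5 := sub_eq_zero.mp h₅
  have e1 := sub_eq_iff_eq_add.mp h₁
  refine ⟨h₁, ?_, by noncomm_ring, h₃, ?_, by noncomm_ring, h₅, by noncomm_ring, ?_,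
    by noncomm_ring⟩
  · show a₁ * (b₁ * a₂) - b₁ * a₂ * a₁ = a₂
    rw [← mul_assoc, e1, mul_assoc b₁ a₂ a₁, ← c3]
    noncomm_ring
  · show b₁ * (b₁ * a₂) - b₁ * a₂ * b₁ = 0
    rw [mul_assoc b₁ a₂ b₁, ← c5]
    noncomm_ring
  · show b₁ * a₂ * a₂ - a₂ * (b₁ * a₂) = 0
    rw [← mul_assoc a₂ b₁ a₂, c5]
    noncomm_ring
end

section
/- Let A be an associative unital algebra over ℂ and let a₁, b₁, a₂, b₂ ∈ A satisfy [a₁,b₁] = [a₂,b₂] = 1 with all cross commutators [a₁,a₂] = [a₁,b₂] = [b₁,a₂] = [b₁,b₂] = 0. Define v₁ = a₁, v₂ = a₂ + (1/2)·b₁², v₃ = b₁, v₄ = b₂, v₅ = 1. Then [v₁,v₂] = v₃, [v₁,v₃] = v₅, [v₂,v₄] = v₅, and all other commutators [vᵢ,vⱼ] for i < j vanish. -/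
/-- pseudo-bosonic realization of the nilpotent Lie algebra `l₅,₅`. -/
theorem stmt_2 (A : Type*) [Ring A] [Algebra ℂ A] (a₁ b₁ a₂ b₂ : A)
    (h₁ : a₁ * b₁ - b₁ * a₁ = 1) (h₂ : a₂ * b₂ - b₂ * a₂ = 1)
    (h₃ : a₁ * a₂ - a₂ * a₁ = 0) (h₄ : a₁ * b₂ - b₂ * a₁ = 0)
    (h₅ : b₁ * a₂ - a₂ * b₁ = 0) (h₆ : b₁ * b₂ - b₂ * b₁ = 0) :
    let v₁ := a₁
    let v₂ := a₂ + ((1 : ℂ) / 2) • b₁ ^ 2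
    let v₃ := b₁
    let v₄ := b₂
    let v₅ := (1 : A)
    v₁ * v₂ - v₂ * v₁ = v₃ ∧ v₁ * v₃ - v₃ * v₁ = v₅ ∧ v₂ * v₄ - v₄ * v₂ = v₅ ∧
    v₁ * v₄ - v₄ * v₁ = 0 ∧ v₁ * v₅ - v₅ * v₁ = 0 ∧
    v₂ * v₃ - v₃ * v₂ = 0 ∧ v₂ * v₅ - v₅ * v₂ = 0 ∧
    v₃ * v₄ - v₄ * v₃ = 0 ∧ v₃ * v₅ - v₅ * v₃ = 0 ∧ v₄ * v₅ - v₅ * v₄ = 0 := by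
  have k₁ : a₁ * b₁ ^ 2 - b₁ ^ 2 * a₁ = b₁ + b₁ := by
    linear_combination (norm := noncomm_ring) h₁ * b₁ + b₁ * h₁
  have k₂ : b₁ ^ 2 * b₂ - b₂ * b₁ ^ 2 = 0 := by
    linear_combination (norm := noncomm_ring) h₆ * b₁ + b₁ * h₆
  have k₃ : b₁ ^ 2 * b₁ - b₁ * b₁ ^ 2 = 0 := by noncomm_ring
  refine ⟨?_, h₁, ?_, h₄, by noncomm_ring, ?_, by noncomm_ring, h₆, by noncomm_ring,
    by noncomm_ring⟩
  · calc a₁ * (a₂ + ((1:ℂ)/2) • b₁ ^ 2) - (a₂ + ((1:ℂ)/2) • b₁ ^ 2) * a₁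
        = (a₁ * a₂ - a₂ * a₁) + ((1:ℂ)/2) • (a₁ * b₁ ^ 2 - b₁ ^ 2 * a₁) := by
          simp only [mul_add, add_mul, smul_mul_assoc, mul_smul_comm, smul_sub]; abel
      _ = b₁ := by rw [h₃, k₁]; module
  · calc (a₂ + ((1:ℂ)/2) • b₁ ^ 2) * b₂ - b₂ * (a₂ + ((1:ℂ)/2) • b₁ ^ 2)
        = (a₂ * b₂ - b₂ * a₂) + ((1:ℂ)/2) • (b₁ ^ 2 * b₂ - b₂ * b₁ ^ 2) := by
          simp only [mul_add, add_mul, smul_mul_assoc, mul_smul_comm, smul_sub]; abel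
      _ = 1 := by rw [h₂, k₂]; module
  · calc (a₂ + ((1:ℂ)/2) • b₁ ^ 2) * b₁ - b₁ * (a₂ + ((1:ℂ)/2) • b₁ ^ 2)
        = -(b₁ * a₂ - a₂ * b₁) + ((1:ℂ)/2) • (b₁ ^ 2 * b₁ - b₁ * b₁ ^ 2) := by
          simp only [mul_add, add_mul, smul_mul_assoc, mul_smul_comm, smul_sub]; abel
      _ = 0 := by rw [h₅, k₃]; module
end
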